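/- arXiv:1802.04434 — 5 statements merged into one kernel-verified Lean document; each statement's English description precedes it below -/
import Mathlib

section
/- Let X be a real random variable that is unimodal and symmetric about its mean μ ≠ 0, with variance at most σ². Define S = |μ|/σ. Then P[sign(X) ≠ sign(μ)] ≤ (2/9)·(1/S²) if S > 2/√3, and P[sign(X) ≠ sign(μ)] ≤ 1/2 − S/(2√3) otherwise; in either case the bound is less than 1/2. -/
open MeasureTheory ProbabilityTheory

/-- A real distribution is unimodal with mode `m` if it has a density (w.r.t. Lebesgue
measure) which is nondecreasing on `(-∞, m]` and nonincreasing on `[m, ∞)`. -/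
def IsUnimodalWithMode (ν : Measure ℝ) (m : ℝ) : Prop :=
  ∃ ρ : ℝ → ℝ, (∀ x, 0 ≤ ρ x) ∧ Measurable ρ ∧
    ν = volume.withDensity (fun x => ENNReal.ofReal (ρ x)) ∧
    MonotoneOn ρ (Set.Iic m) ∧ AntitoneOn ρ (Set.Ici m)

/-!
The law of `X - μ` is symmetric, with a density `g y = ρ (y + μ)` nonincreasing on `(0, ∞)`, so
`∫_{(0,∞)} g = 1/2`, `∫_{(0,∞)} y² g ≤ σ²/2`, and the sign of `X` is wrong with probability
`∫_{(|μ|,∞)} g`. By the layer-cake formula `∫ u g = ∫_{t>0} ∫_{g>t} u`, in which every superlevel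
set `{g > t} ∩ (0, ∞)` is an interval `(0, a]` up to a null set, `∫_{(0,∞)} u g ≥ 0` as soon as
all primitives `∫_{(0,a]} u` are nonnegative. Gauss' inequality follows by testing against
`u = 1_{(0,k]} - p + q y²`, with `(p, q) = (1, 4/(9k²))` for the tail bound and
`(p, q) = (√3 k/(2σ), √3 k/(6σ³))` for the central one; nonnegativity of the primitives is then a
cubic inequality in `a`.
-/

open Set

theorem integral_mul_eq_integral_setIntegral_lt {α : Type*} [MeasurableSpace α] {μ : Measure α}
    [SFinite μ] {u g : α → ℝ} (hu : Measurable u) (hg : Measurable g) (hg0 : ∀ x, 0 ≤ g x)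
    (hug : Integrable (fun x => u x * g x) μ) :
    ∫ x, u x * g x ∂μ = ∫ t in Ioi 0, ∫ x in {x | t < g x}, u x ∂μ := by
  set E : Set (α × ℝ) := {p | p.2 < g p.1}
  have hE : MeasurableSet E := measurableSet_lt measurable_snd (hg.comp measurable_fst)
  set F : α → ℝ → ℝ := fun x t => E.indicator (fun p => u p.1) (x, t)
  have hF_fiber : ∀ x, (fun t => F x t) = (Iio (g x)).indicator fun _ => u x := fun x => rfl
  have hF_fiber_int : ∀ x (c : ℝ), IntegrableOn ((Iio (g x)).indicator fun _ => c) (Ioi 0) := by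
    intro x c
    rw [IntegrableOn, integrable_indicator_iff measurableSet_Iio, IntegrableOn,
      Measure.restrict_restrict measurableSet_Iio, Iio_inter_Ioi]
    exact integrableOn_const measure_Ioo_lt_top.ne
  have hF_fiber_eq : ∀ x (c : ℝ), ∫ t in Ioi 0, (Iio (g x)).indicator (fun _ => c) t = g x * c := by
    intro x c
    rw [setIntegral_indicator measurableSet_Iio, Ioi_inter_Iio, setIntegral_const,
      Real.volume_real_Ioo, sub_zero, max_eq_left (hg0 x), smul_eq_mul]
  have hF : Integrable (Function.uncurry F) (μ.prod (volume.restrict (Ioi 0))) := by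
    have hFm : AEStronglyMeasurable (Function.uncurry F) (μ.prod (volume.restrict (Ioi 0))) :=
      ((hu.comp measurable_fst).indicator hE).aestronglyMeasurable
    refine (integrable_prod_iff hFm).2
      ⟨Filter.Eventually.of_forall fun x => hF_fiber_int x (u x), ?_⟩
    refine hug.norm.congr (Filter.Eventually.of_forall fun x => ?_)
    have : (fun t => ‖Function.uncurry F (x, t)‖) = (Iio (g x)).indicator fun _ => ‖u x‖ :=
      funext (norm_indicator_eq_indicator_norm (fun _ => u x))
    simp only [this, hF_fiber_eq, norm_mul, Real.norm_of_nonneg (hg0 x), mul_comm]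
  calc ∫ x, u x * g x ∂μ = ∫ x, (∫ t in Ioi (0 : ℝ), F x t) ∂μ := by
        simp only [hF_fiber, hF_fiber_eq, mul_comm]
    _ = ∫ t in Ioi 0, ∫ x, F x t ∂μ := integral_integral_swap hF
    _ = ∫ t in Ioi 0, ∫ x in {x | t < g x}, u x ∂μ := by
        congr 1; ext t
        exact integral_indicator (measurableSet_lt measurable_const hg)

theorem AntitoneOn.exists_superlevel_ae_eq_Ioc {g : ℝ → ℝ} (hga : AntitoneOn g (Ioi 0))
    (hg : Measurable g) (hgi : IntegrableOn g (Ioi 0)) {t : ℝ} (ht : 0 < t) :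
    ∃ a, (Ioi 0 ∩ {x | t < g x} : Set ℝ) =ᵐ[volume] (Ioc 0 a : Set ℝ) := by
  set B := Ioi (0 : ℝ) ∩ {x | t < g x}
  have hdown : ∀ x ∈ Ioi (0 : ℝ), ∀ y ∈ B, x ≤ y → x ∈ B :=
    fun x hx y hy hxy => ⟨hx, hy.2.trans_le (hga hx hy.1 hxy)⟩
  have hbdd : BddAbove B := by
    by_contra hB
    have hle : ∀ x ∈ Ioi (0 : ℝ), ‖t‖ ≤ g x := fun x hx => by
      obtain ⟨y, hy, hxy⟩ := not_bddAbove_iff.mp hB x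
      simpa [abs_of_pos ht] using (hdown x hx y hy hxy.le).2.le
    have : IntegrableOn (fun _ => t) (Ioi (0 : ℝ)) :=
      hgi.mono' aestronglyMeasurable_const ((ae_restrict_iff' measurableSet_Ioi).2
        (Filter.Eventually.of_forall hle))
    simp [integrableOn_const_iff, ht.ne'] at this
  refine ⟨sSup B, ae_eq_of_subset_of_measure_ge (fun x hx => ⟨hx.1, le_csSup hbdd hx⟩) ?_
    (measurableSet_Ioi.inter (measurableSet_lt measurable_const hg)).nullMeasurableSet
    measure_Ioc_lt_top.ne⟩
  rw [← measure_congr Ioo_ae_eq_Ioc]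
  refine measure_mono fun x hx => ?_
  have hne : B.Nonempty := by
    by_contra h
    rw [not_nonempty_iff_eq_empty.mp h, Real.sSup_empty] at hx
    exact (hx.1.trans hx.2).false
  obtain ⟨y, hy, hxy⟩ := exists_lt_of_lt_csSup hne hx.2
  exact hdown x hx.1 y hy hxy.le

theorem AntitoneOn.setIntegral_mul_nonneg {u g : ℝ → ℝ} (hga : AntitoneOn g (Ioi 0))
    (hu : Measurable u) (hg : Measurable g) (hg0 : ∀ x, 0 ≤ g x) (hgi : IntegrableOn g (Ioi 0))
    (hug : IntegrableOn (fun x => u x * g x) (Ioi 0))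
    (hU : ∀ a, 0 < a → 0 ≤ ∫ x in Ioc 0 a, u x) :
    0 ≤ ∫ x in Ioi 0, u x * g x := by
  rw [integral_mul_eq_integral_setIntegral_lt hu hg hg0 hug]
  refine setIntegral_nonneg measurableSet_Ioi fun t ht => ?_
  obtain ⟨a, ha⟩ := hga.exists_superlevel_ae_eq_Ioc hg hgi ht
  rw [Measure.restrict_restrict (measurableSet_lt measurable_const hg), inter_comm,
    setIntegral_congr_set ha]
  rcases le_or_gt a 0 with ha0 | ha0
  · simp [Ioc_eq_empty_of_le ha0]
  · exact hU a ha0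

theorem AntitoneOn.le_setIntegral_Ioc {g : ℝ → ℝ} {k p q : ℝ} (hga : AntitoneOn g (Ioi 0))
    (hg : Measurable g) (hg0 : ∀ x, 0 ≤ g x) (hgi : IntegrableOn g (Ioi 0))
    (hg2 : IntegrableOn (fun x => x ^ 2 * g x) (Ioi 0))
    (hpq : ∀ a, 0 < a → p * a - q * a ^ 3 / 3 ≤ min a k) :
    p * (∫ x in Ioi 0, g x) - q * ∫ x in Ioi 0, x ^ 2 * g x ≤ ∫ x in Ioc 0 k, g x := by
  set u : ℝ → ℝ := fun x => (Ioc 0 k).indicator 1 x - p + q * x ^ 2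
  have hug : (fun x => u x * g x) =
      fun x => ((Ioc 0 k).indicator g x - p * g x) + q * (x ^ 2 * g x) := by
    ext x
    by_cases hx : x ∈ Ioc 0 k
    · simp only [u, hx, indicator_of_mem, Pi.one_apply]; ring
    · simp only [u, hx, not_false_eq_true, indicator_of_notMem, zero_sub]; ring
  have hIk : IntegrableOn ((Ioc 0 k).indicator g) (Ioi 0) := hgi.indicator measurableSet_Ioc
  have hIkp : IntegrableOn (fun x => (Ioc 0 k).indicator g x - p * g x) (Ioi 0) :=
    hIk.sub (hgi.const_mul p)
  have hsplit : ∫ x in Ioi 0, u x * g x =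
      (∫ x in Ioc 0 k, g x) - p * (∫ x in Ioi 0, g x) + q * ∫ x in Ioi 0, x ^ 2 * g x := by
    rw [hug, integral_add hIkp (hg2.const_mul q), integral_sub hIk (hgi.const_mul p),
      integral_const_mul, integral_const_mul, setIntegral_indicator measurableSet_Ioc,
      inter_eq_self_of_subset_right Ioc_subset_Ioi_self]
  have hu_Ioc : ∀ a, 0 < a → ∫ x in Ioc 0 a, u x = max (min a k) 0 - p * a + q * a ^ 3 / 3 := by
    intro a ha
    have h1 : IntegrableOn ((Ioc 0 k).indicator 1) (Ioc 0 a) :=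
      (integrableOn_const (C := (1 : ℝ)) measure_Ioc_lt_top.ne).indicator measurableSet_Ioc
    have hp : IntegrableOn (fun _ => p) (Ioc 0 a) := integrableOn_const measure_Ioc_lt_top.ne
    have h2 : IntegrableOn (fun x : ℝ => q * x ^ 2) (Ioc 0 a) :=
      (continuous_const.mul (continuous_pow 2)).integrableOn_Ioc
    have h1p : IntegrableOn (fun x => (Ioc 0 k).indicator 1 x - p) (Ioc 0 a) := h1.sub hp
    have hsq : ∫ x in Ioc 0 a, q * x ^ 2 = q * a ^ 3 / 3 := by
      rw [integral_const_mul, ← intervalIntegral.integral_of_le ha.le, integral_pow]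
      ring
    rw [integral_add h1p h2, integral_sub h1 hp, hsq, setIntegral_const,
      setIntegral_indicator measurableSet_Ioc, Ioc_inter_Ioc]
    simp only [Pi.one_apply, setIntegral_const, max_self, Real.volume_real_Ioc, smul_eq_mul,
      mul_one, sub_zero, max_eq_left ha.le]
    ring
  have key := hga.setIntegral_mul_nonneg (u := u)
    (((measurable_one.indicator measurableSet_Ioc).sub_const p).add
      ((measurable_id.pow_const 2).const_mul q)) hg hg0 hgi
    (hug ▸ hIkp.add (hg2.const_mul q)) fun a ha => by
      rw [hu_Ioc a ha]
      linarith [hpq a ha, le_max_left (min a k) 0]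
  linarith

theorem tail_poly_le_min {k a : ℝ} (hk : 0 < k) (ha : 0 < a) :
    a - 4 / (9 * k ^ 2) * a ^ 3 / 3 ≤ min a k := by
  rcases le_total a k with hak | hak
  · rw [min_eq_left hak]
    have : 0 ≤ 4 / (9 * k ^ 2) * a ^ 3 / 3 := by positivity
    linarith
  · have : 4 / (9 * k ^ 2) * a ^ 3 / 3 = 4 * a ^ 3 / (27 * k ^ 2) := by field_simp; ring
    rw [min_eq_right hak, this, sub_le_iff_le_add, ← sub_le_iff_le_add',
      le_div_iff₀ (by positivity)]
    nlinarith [mul_nonneg (sq_nonneg (2 * a - 3 * k)) (by linarith : 0 ≤ a + 3 * k)]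

theorem central_poly_le_min {k s a : ℝ} (hk : 0 ≤ k) (hs : 0 < s) (hks : √3 * k ≤ 2 * s)
    (ha : 0 < a) : √3 * k / (2 * s) * a - √3 * k / (6 * s ^ 3) * a ^ 3 / 3 ≤ min a k := by
  rcases le_total a k with hak | hak
  · rw [min_eq_left hak]
    have : √3 * k / (2 * s) * a ≤ a :=
      mul_le_of_le_one_left ha.le ((div_le_one (by positivity)).2 hks)
    have : 0 ≤ √3 * k / (6 * s ^ 3) * a ^ 3 / 3 := by positivity
    linarith
  · have h3 : √3 ^ 2 = 3 := Real.sq_sqrt (by norm_num)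
    have hcubic : 0 ≤ √3 * a ^ 3 - 9 * √3 * s ^ 2 * a + 18 * s ^ 3 := by
      have : √3 * a ^ 3 - 9 * √3 * s ^ 2 * a + 18 * s ^ 3 =
          √3 * ((a - √3 * s) ^ 2 * (a + 2 * √3 * s)) := by
        linear_combination (3 * √3 * s ^ 2 * a - 2 * s ^ 3 * (√3 ^ 2 + 3)) * h3
      rw [this]; positivity
    have : k - (√3 * k / (2 * s) * a - √3 * k / (6 * s ^ 3) * a ^ 3 / 3) =
        k / (18 * s ^ 3) * (√3 * a ^ 3 - 9 * √3 * s ^ 2 * a + 18 * s ^ 3) := by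
      field_simp; ring
    rw [min_eq_right hak]
    linarith [mul_nonneg (by positivity : 0 ≤ k / (18 * s ^ 3)) hcubic]

section WithDensity

variable {α : Type*} [MeasurableSpace α] {μ : Measure α} {g : α → ℝ}

theorem integrable_withDensity_ofReal_iff (hg : Measurable g) (hg0 : ∀ x, 0 ≤ g x)
    {f : α → ℝ} :
    Integrable f (μ.withDensity fun x => ENNReal.ofReal (g x)) ↔
      Integrable (fun x => g x * f x) μ := by
  rw [integrable_withDensity_iff_integrable_smul' hg.ennreal_ofReal
    (Filter.Eventually.of_forall fun _ => ENNReal.ofReal_lt_top)]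
  simp only [ENNReal.toReal_ofReal (hg0 _), smul_eq_mul]

theorem setIntegral_withDensity_ofReal [SFinite μ] (hg : Measurable g) (hg0 : ∀ x, 0 ≤ g x)
    (f : α → ℝ) (s : Set α) :
    ∫ x in s, f x ∂μ.withDensity (fun x => ENNReal.ofReal (g x)) = ∫ x in s, g x * f x ∂μ := by
  rw [setIntegral_withDensity_eq_setIntegral_toReal_smul' s hg.ennreal_ofReal
    (Filter.Eventually.of_forall fun _ => ENNReal.ofReal_lt_top)]
  simp only [ENNReal.toReal_ofReal (hg0 _), smul_eq_mul]

end WithDensity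

theorem setIntegral_Ioi_eq_half_integral {ν : Measure ℝ} [ν.IsNegInvariant] [NullSingletonClass ν]
    {f : ℝ → ℝ} (hf : ∀ x, f (-x) = f x) (hfi : Integrable f ν) :
    ∫ x in Ioi 0, f x ∂ν = (∫ x, f x ∂ν) / 2 := by
  have hIic : ∫ x in Iic 0, f x ∂ν = ∫ x in Ioi 0, f x ∂ν := by
    have hpre : Iio (0 : ℝ) = Neg.neg ⁻¹' Ioi 0 := by ext; simp
    calc ∫ x in Iic 0, f x ∂ν = ∫ x in Neg.neg ⁻¹' Ioi 0, f (-x) ∂ν := by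
          rw [setIntegral_congr_set Iio_ae_eq_Iic.symm, hpre]; simp only [hf]
      _ = ∫ x in Ioi 0, f x ∂ν := (Measure.measurePreserving_neg ν).setIntegral_preimage_emb
          (MeasurableEquiv.neg ℝ).measurableEmbedding f _
  rw [← integral_add_compl (measurableSet_Ioi (a := 0)) hfi, compl_Ioi, hIic]
  ring

section SymmetricUnimodal

variable {ν : Measure ℝ} [IsProbabilityMeasure ν] [ν.IsNegInvariant] {g : ℝ → ℝ}

theorem measureReal_Ioi_le_of_antitoneOn_density
    (hν : ν = volume.withDensity fun x => ENNReal.ofReal (g x)) (hg : Measurable g)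
    (hg0 : ∀ x, 0 ≤ g x) (hga : AntitoneOn g (Ioi 0)) (h2 : Integrable (fun x => x ^ 2) ν)
    {k p q : ℝ} (hk : 0 ≤ k) (hpq : ∀ a, 0 < a → p * a - q * a ^ 3 / 3 ≤ min a k) :
    ν.real (Ioi k) ≤ 1 / 2 - p / 2 + q * (∫ x, x ^ 2 ∂ν) / 2 := by
  have : NullSingletonClass ν := hν ▸ inferInstance
  have hmoment : ∀ f : ℝ → ℝ, (∀ x, f (-x) = f x) → Integrable f ν →
      IntegrableOn (fun x => g x * f x) (Ioi 0) ∧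
        ∫ x in Ioi 0, g x * f x = (∫ x, f x ∂ν) / 2 :=
    fun f hf hfi => ⟨((integrable_withDensity_ofReal_iff hg hg0).1 (hν ▸ hfi)).integrableOn, by
      rw [← setIntegral_withDensity_ofReal hg hg0, ← hν]
      exact setIntegral_Ioi_eq_half_integral hf hfi⟩
  obtain ⟨hgi, hm⟩ := hmoment 1 (fun _ => rfl) (integrable_const 1)
  obtain ⟨hg2, hM⟩ := hmoment (· ^ 2) (fun x => neg_sq x) h2
  simp only [Pi.one_apply, mul_one, integral_const, probReal_univ, smul_eq_mul] at hgi hm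
  simp only [mul_comm (g _)] at hg2 hM
  have hreal : ∀ s, ν.real s = ∫ x in s, g x := fun s => by
    simpa [hν] using setIntegral_withDensity_ofReal hg hg0 (μ := volume) (fun _ => (1 : ℝ)) s
  have hsplit : ν.real (Ioi k) = 1 / 2 - ∫ x in Ioc 0 k, g x := by
    rw [← hm, ← hreal, ← hreal, ← Ioc_union_Ioi_eq_Ioi hk,
      measureReal_union (Ioc_disjoint_Ioi le_rfl) measurableSet_Ioi]
    ring
  have hIoc := hga.le_setIntegral_Ioc hg hg0 hgi hg2 hpq
  rw [hm, hM] at hIoc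
  linarith

theorem gauss_tail_of_antitoneOn_density
    (hν : ν = volume.withDensity fun x => ENNReal.ofReal (g x)) (hg : Measurable g)
    (hg0 : ∀ x, 0 ≤ g x) (hga : AntitoneOn g (Ioi 0)) (h2 : Integrable (fun x => x ^ 2) ν)
    {k s : ℝ} (hk : 0 < k) (hvar : ∫ x, x ^ 2 ∂ν ≤ s ^ 2) :
    ν.real (Ioi k) ≤ 2 * s ^ 2 / (9 * k ^ 2) := by
  have := measureReal_Ioi_le_of_antitoneOn_density hν hg hg0 hga h2 hk.le (p := 1)
    fun a ha => by simpa using tail_poly_le_min hk ha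
  calc ν.real (Ioi k) ≤ 4 / (9 * k ^ 2) * s ^ 2 / 2 := by
        linarith [mul_le_mul_of_nonneg_left hvar (by positivity : (0 : ℝ) ≤ 4 / (9 * k ^ 2))]
    _ = 2 * s ^ 2 / (9 * k ^ 2) := by ring

theorem gauss_central_of_antitoneOn_density
    (hν : ν = volume.withDensity fun x => ENNReal.ofReal (g x)) (hg : Measurable g)
    (hg0 : ∀ x, 0 ≤ g x) (hga : AntitoneOn g (Ioi 0)) (h2 : Integrable (fun x => x ^ 2) ν)
    {k s : ℝ} (hk : 0 ≤ k) (hs : 0 < s) (hks : √3 * k ≤ 2 * s) (hvar : ∫ x, x ^ 2 ∂ν ≤ s ^ 2) :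
    ν.real (Ioi k) ≤ 1 / 2 - k / (2 * √3 * s) := by
  have := measureReal_Ioi_le_of_antitoneOn_density hν hg hg0 hga h2 hk
    fun a ha => central_poly_le_min hk hs hks ha
  have h3 : √3 ^ 2 = 3 := Real.sq_sqrt (by norm_num)
  calc ν.real (Ioi k) ≤ 1 / 2 - √3 * k / (2 * s) / 2 + √3 * k / (6 * s ^ 3) * s ^ 2 / 2 := by
        linarith [mul_le_mul_of_nonneg_left hvar (by positivity : 0 ≤ √3 * k / (6 * s ^ 3))]
    _ = 1 / 2 - k / (2 * √3 * s) := by field_simp; linear_combination (-4 * k) * h3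

end SymmetricUnimodal

theorem Real.measurable_sign : Measurable Real.sign :=
  Measurable.ite measurableSet_Iio measurable_const
    (Measurable.ite measurableSet_Ioi measurable_const measurable_const)

theorem map_sub_const_withDensity (f : ℝ → ENNReal) (c : ℝ) :
    (volume.withDensity f).map (· - c) = volume.withDensity fun y => f (y + c) := by
  ext s hs
  rw [Measure.map_apply (measurable_sub_const c) hs, withDensity_apply _ hs,
    withDensity_apply _ (measurable_sub_const c hs)]
  have hpre : (· + c) ⁻¹' ((· - c) ⁻¹' s) = s := by ext; simp
  conv_rhs => rw [← hpre]
  exact ((measurePreserving_add_right volume c).setLIntegral_comp_preimage_emb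
    (measurableEmbedding_addRight c) f _).symm

theorem isNegInvariant_map_sub_of_map_reflect {ν : Measure ℝ} {c : ℝ}
    (h : ν.map (fun x => 2 * c - x) = ν) : (ν.map (· - c)).IsNegInvariant := by
  refine ⟨?_⟩
  rw [Measure.neg, Measure.map_map measurable_neg (measurable_sub_const c)]
  conv_rhs => rw [← h, Measure.map_map (measurable_sub_const c) (measurable_const_sub (2 * c))]
  congr 1
  ext x
  simp only [Function.comp_apply]
  ring

theorem Real.sign_eq_neg_one_iff {x : ℝ} : Real.sign x = -1 ↔ x < 0 := by
  refine ⟨fun h => ?_, Real.sign_of_neg⟩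
  unfold Real.sign at h
  split_ifs at h with h₁ <;> norm_num at h
  exact h₁

theorem Real.sign_eq_one_iff {x : ℝ} : Real.sign x = 1 ↔ 0 < x := by
  refine ⟨fun h => ?_, Real.sign_of_pos⟩
  unfold Real.sign at h
  split_ifs at h with h₁ h₂ <;> norm_num at h
  exact h₂

theorem setOf_sign_add_ne_sign {c : ℝ} (hc : c ≠ 0) :
    {y : ℝ | Real.sign (y + c) ≠ Real.sign c} = Ici |c| ∨
      {y : ℝ | Real.sign (y + c) ≠ Real.sign c} = -Ici |c| := by
  rcases hc.lt_or_gt with hc | hc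
  · left
    ext y
    simp only [mem_ofPred_eq, mem_Ici, Real.sign_of_neg hc, abs_of_neg hc, ne_eq,
      Real.sign_eq_neg_one_iff, not_lt, neg_le_iff_add_nonneg]
  · right
    ext y
    simp only [mem_ofPred_eq, Set.neg_Ici, mem_Iic, Real.sign_of_pos hc, abs_of_pos hc, ne_eq,
      Real.sign_eq_one_iff, not_lt, le_neg_iff_add_nonpos_right]

theorem measure_sign_add_ne_sign {ν : Measure ℝ} [ν.IsNegInvariant] [NullSingletonClass ν]
    {c : ℝ} (hc : c ≠ 0) : ν {y | Real.sign (y + c) ≠ Real.sign c} = ν (Ioi |c|) := by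
  rw [measure_congr Ioi_ae_eq_Ici]
  rcases setOf_sign_add_ne_sign hc with h | h <;> rw [h]
  exact Measure.measure_neg ν _

theorem sign_error_bounds_of_gauss {P k σ S : ℝ} (hk : 0 < k) (hσ : 0 < σ) (hS : S = k / σ)
    (htail : P ≤ 2 * σ ^ 2 / (9 * k ^ 2))
    (hcentral : √3 * k ≤ 2 * σ → P ≤ 1 / 2 - k / (2 * √3 * σ)) :
    ((2 / √3 < S → P ≤ 2 / 9 * (1 / S ^ 2)) ∧ (S ≤ 2 / √3 → P ≤ 1 / 2 - S / (2 * √3))) ∧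
      P < 1 / 2 := by
  have h3 : √3 ^ 2 = 3 := Real.sq_sqrt (by norm_num)
  have hs3 : 0 < √3 := by positivity
  have hS0 : 0 < S := hS ▸ div_pos hk hσ
  have htail' : P ≤ 2 / 9 * (1 / S ^ 2) := by
    convert htail using 1; rw [hS]; field_simp
  have hcentral' : S ≤ 2 / √3 → P ≤ 1 / 2 - S / (2 * √3) := fun h => by
    convert hcentral ?_ using 2
    · rw [hS]; field_simp
    · rw [hS, div_le_div_iff₀ hσ hs3] at h; linarith
  refine ⟨⟨fun _ => htail', hcentral'⟩, ?_⟩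
  rcases le_or_gt S (2 / √3) with h | h
  · linarith [hcentral' h, div_pos hS0 (by positivity : 0 < 2 * √3)]
  · have : 4 / 3 < S ^ 2 := by
      have := pow_lt_pow_left₀ h (by positivity) two_ne_zero
      rw [div_pow, h3] at this; linarith
    have : 1 / S ^ 2 < 3 / 4 := by
      rw [div_lt_div_iff₀ (by positivity) (by norm_num)]; linarith
    linarith

theorem sign_error_prob_gauss_inequality_general
    {Ω : Type*} [MeasureSpace Ω] [IsProbabilityMeasure (ℙ : Measure Ω)]
    (X : Ω → ℝ) (μ σ S : ℝ) (hXm : Measurable X)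
    (hX2 : Integrable (fun ω => (X ω - μ) ^ 2) ℙ)
    (hμ : μ ≠ 0) (hσ : 0 < σ)
    (hvar : ∫ ω, (X ω - μ) ^ 2 ∂ℙ ≤ σ ^ 2)
    (hunimodal : IsUnimodalWithMode (Measure.map X ℙ) μ)
    (hsymm : (Measure.map X ℙ).map (fun x => 2 * μ - x) = Measure.map X ℙ)
    (hS : S = |μ| / σ) :
    ((2 / Real.sqrt 3 < S →
        (ℙ {ω | Real.sign (X ω) ≠ Real.sign μ}).toReal ≤ (2 / 9) * (1 / S ^ 2)) ∧
      (S ≤ 2 / Real.sqrt 3 →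
        (ℙ {ω | Real.sign (X ω) ≠ Real.sign μ}).toReal ≤ 1 / 2 - S / (2 * Real.sqrt 3))) ∧
      (ℙ {ω | Real.sign (X ω) ≠ Real.sign μ}).toReal < 1 / 2 := by
  obtain ⟨ρ, hρ0, hρm, hρ, -, hanti⟩ := hunimodal
  set ν := (Measure.map X ℙ).map (· - μ)
  have hνX : ν = Measure.map (fun ω => X ω - μ) ℙ := Measure.map_map (measurable_sub_const μ) hXm
  have hν : ν = volume.withDensity fun y => ENNReal.ofReal (ρ (y + μ)) := by
    simp only [ν, hρ, map_sub_const_withDensity]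
  have : IsProbabilityMeasure ν := hνX ▸ Measure.isProbabilityMeasure_map (by fun_prop)
  have : ν.IsNegInvariant := isNegInvariant_map_sub_of_map_reflect hsymm
  have : NullSingletonClass ν := hν ▸ inferInstance
  have h2 : Integrable (fun y => y ^ 2) ν :=
    hνX ▸ (integrable_map_measure (by fun_prop) (by fun_prop)).2 hX2
  have hvarν : ∫ y, y ^ 2 ∂ν ≤ σ ^ 2 := by rwa [hνX, integral_map (by fun_prop) (by fun_prop)]
  have hg : Measurable fun y => ρ (y + μ) := hρm.comp (measurable_add_const μ)
  have hga : AntitoneOn (fun y => ρ (y + μ)) (Ioi 0) := fun x hx y hy hxy =>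
    hanti (mem_Ici.2 (le_add_of_nonneg_left (le_of_lt hx)))
      (mem_Ici.2 (le_add_of_nonneg_left (le_of_lt hy))) (by linarith)
  have herr : ℙ {ω | Real.sign (X ω) ≠ Real.sign μ} = ν (Ioi |μ|) := by
    have hE : MeasurableSet {y : ℝ | Real.sign (y + μ) ≠ Real.sign μ} :=
      (Real.measurable_sign.comp (measurable_add_const μ)) (measurableSet_singleton _).compl
    rw [← measure_sign_add_ne_sign hμ, hνX, Measure.map_apply (by fun_prop) hE]
    simp
  rw [herr]
  exact sign_error_bounds_of_gauss (abs_pos.2 hμ) hσ hS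
    (gauss_tail_of_antitoneOn_density hν hg (fun _ => hρ0 _) hga h2 (abs_pos.2 hμ) hvarν)
    fun hks => gauss_central_of_antitoneOn_density hν hg (fun _ => hρ0 _) hga h2 (abs_nonneg μ)
      hσ hks hvarν

theorem sign_error_prob_gauss_inequality
    {Ω : Type*} [MeasureSpace Ω] [IsProbabilityMeasure (ℙ : Measure Ω)]
    (X : Ω → ℝ) (μ σ S : ℝ) (hX : Integrable X ℙ) (hXm : Measurable X)
    (hX2 : Integrable (fun ω => (X ω - μ) ^ 2) ℙ)
    (hmean : ∫ ω, X ω ∂ℙ = μ) (hμ : μ ≠ 0) (hσ : 0 < σ)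
    (hvar : ∫ ω, (X ω - μ) ^ 2 ∂ℙ ≤ σ ^ 2)
    (hunimodal : IsUnimodalWithMode (Measure.map X ℙ) μ)
    (hsymm : (Measure.map X ℙ).map (fun x => 2 * μ - x) = Measure.map X ℙ)
    (hS : S = |μ| / σ) :
    ((2 / Real.sqrt 3 < S →
        (ℙ {ω | Real.sign (X ω) ≠ Real.sign μ}).toReal ≤ (2 / 9) * (1 / S ^ 2)) ∧
      (S ≤ 2 / Real.sqrt 3 →
        (ℙ {ω | Real.sign (X ω) ≠ Real.sign μ}).toReal ≤ 1 / 2 - S / (2 * Real.sqrt 3))) ∧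
      (ℙ {ω | Real.sign (X ω) ≠ Real.sign μ}).toReal < 1 / 2 :=
  sign_error_prob_gauss_inequality_general X μ σ S hXm hX2 hμ hσ hvar hunimodal hsymm hS
end

section
/- Let f : ℝ^d → ℝ be differentiable with gradient g, satisfying the coordinate-wise smoothness |f(y) − f(x) − g(x)ᵀ(y−x)| ≤ (1/2)Σᵢ Lᵢ(yᵢ−xᵢ)². If x' = x − δ·sign(ṽ) for any vector ṽ ∈ ℝ^d with nonzero coordinates and δ > 0, then f(x') − f(x) ≤ −δ‖g(x)‖₁ + (δ²/2)‖L‖₁ + 2δ Σᵢ |g(x)ᵢ|·𝟙[sign(ṽᵢ) ≠ sign(g(x)ᵢ)]. -/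
theorem signSGD_single_step_descent {d : ℕ}
    (f : (Fin d → ℝ) → ℝ) (g : (Fin d → ℝ) → (Fin d → ℝ)) (L : Fin d → ℝ)
    (hL : ∀ i, 0 ≤ L i)
    (hsmooth : ∀ x y : Fin d → ℝ,
      |f y - (f x + ∑ i, g x i * (y i - x i))| ≤ (1 / 2) * ∑ i, L i * (y i - x i) ^ 2)
    (x x' v : Fin d → ℝ) (hv : ∀ i, v i ≠ 0) (δ : ℝ) (hδ : 0 < δ)
    (hupdate : ∀ i, x' i = x i - δ * Real.sign (v i)) :
    f x' - f x ≤ -δ * (∑ i, |g x i|) + (δ ^ 2 / 2) * (∑ i, L i) +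
      2 * δ * ∑ i, |g x i| * (if Real.sign (v i) ≠ Real.sign (g x i) then 1 else 0) := by
  have hsgn : ∀ i, Real.sign (v i) = -1 ∨ Real.sign (v i) = 1 := by
    intro i
    rcases lt_trichotomy (v i) 0 with h | h | h
    · exact Or.inl (Real.sign_of_neg h)
    · exact absurd h (hv i)
    · exact Or.inr (Real.sign_of_pos h)
  have hsq : ∀ i, (x' i - x i) ^ 2 = δ ^ 2 := by
    intro i
    rw [hupdate i]
    rcases hsgn i with h | h <;> rw [h] <;> ring
  have hkey : ∀ i, g x i * (x' i - x i) ≤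
      -δ * |g x i| + 2 * δ * (|g x i| * (if Real.sign (v i) ≠ Real.sign (g x i) then 1 else 0)) := by
    intro i
    rw [hupdate i]
    have h1 : x i - δ * Real.sign (v i) - x i = -δ * Real.sign (v i) := by ring
    rw [h1]
    by_cases hc : Real.sign (v i) ≠ Real.sign (g x i)
    · rw [if_pos hc]
      have h2 : |g x i * Real.sign (v i)| ≤ |g x i| := by
        rw [abs_mul]
        rcases hsgn i with h | h <;> rw [h] <;> simp
      have := neg_abs_le (g x i * Real.sign (v i))
      nlinarith [abs_nonneg (g x i)]
    · push_neg at hc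
      simp only [hc]
      have hg0 : g x i ≠ 0 := by
        intro h0
        rcases hsgn i with h | h <;> rw [hc, h0, Real.sign_zero] at h <;> norm_num at h
      have h2 : g x i * Real.sign (g x i) = |g x i| := by
        rcases lt_trichotomy (g x i) 0 with h | h | h
        · rw [Real.sign_of_neg h, abs_of_neg h]; ring
        · exact absurd h hg0
        · rw [Real.sign_of_pos h, abs_of_pos h]; ring
      simp
      nlinarith
  have hΔ : f x' - (f x + ∑ i, g x i * (x' i - x i)) ≤ (1 / 2) * ∑ i, L i * (x' i - x i) ^ 2 :=
    le_trans (le_abs_self _) (hsmooth x x')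
  have hs1 : ∑ i, g x i * (x' i - x i) ≤
      ∑ i, (-δ * |g x i| + 2 * δ * (|g x i| * (if Real.sign (v i) ≠ Real.sign (g x i) then 1 else 0))) :=
    Finset.sum_le_sum fun i _ => hkey i
  have hs2 : ∑ i, L i * (x' i - x i) ^ 2 = δ ^ 2 * ∑ i, L i := by
    rw [Finset.mul_sum]
    exact Finset.sum_congr rfl fun i _ => by rw [hsq i]; ring
  rw [hs2] at hΔ
  rw [Finset.sum_add_distrib, ← Finset.mul_sum, ← Finset.mul_sum] at hs1
  linarith
end

section
/- Run signSGD with constant learning rate δ = 1/√(‖L‖₁ K) and mini-batch size n = K for K iterations, starting at x₀ with objective gap f₀ − f* where f ≥ f* is lower bounded, f satisfies coordinate-wise L-smoothness, and the stochastic gradient oracle is unbiased with coordinate-wise variances σᵢ². Then (E[(1/K)Σ_{k<K} ‖g_k‖₁])² ≤ (1/√N)[√(‖L‖₁)(f₀ − f* + 1/2) + 2‖σ‖₁]², where N = K² is the total number of stochastic gradient calls and g_k = ∇f(x_k). -/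
/-!
Each signSGD step moves every coordinate by at most `δ`, so coordinate-wise smoothness gives
`f(x_{k+1}) + δ‖g_k‖₁ ≤ f(x_k) + 2δ‖g̃_k - g_k‖₁ + δ²‖L‖₁/2`; the error term pays for the
coordinates whose sign is wrong, via `|a| - a · sign b ≤ 2|b - a|`. Telescoping and `f ≥ f*`
bound `δ Σ_k ‖g_k‖₁` pathwise; in expectation `E|g̃_k,i - g_k,i| ≤ σᵢ/√K` by Jensen and the
conditional variance bound, and `δ = 1/√(‖L‖₁K)` balances the resulting terms.
-/

open MeasureTheory ProbabilityTheory Finset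

lemma abs_sub_mul_sign_le (a b : ℝ) : |a| - a * Real.sign b ≤ 2 * |b - a| := by
  rcases lt_trichotomy b 0 with hb | rfl | hb
  · rw [Real.sign_of_neg hb]
    cases abs_cases a <;> cases abs_cases (b - a) <;> linarith
  · simp only [Real.sign_zero, mul_zero, sub_zero, zero_sub, abs_neg]
    linarith [abs_nonneg a]
  · rw [Real.sign_of_pos hb]
    cases abs_cases a <;> cases abs_cases (b - a) <;> linarith

lemma sign_sq_le_one (r : ℝ) : Real.sign r ^ 2 ≤ 1 := by
  rcases Real.sign_apply_eq r with h | h | h <;> rw [h] <;> norm_num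

section Probability

variable {Ω : Type*} {m m₀ : MeasurableSpace Ω} {μ : Measure[m₀] Ω} [IsProbabilityMeasure μ]

lemma integral_le_of_ae_condExp_le {f : Ω → ℝ} {c : ℝ} (hm : m ≤ m₀)
    (h : ∀ᵐ ω ∂μ, μ[f | m] ω ≤ c) : ∫ ω, f ω ∂μ ≤ c := by
  have : IsFiniteMeasure (μ.trim hm) := isFiniteMeasure_trim hm
  calc ∫ ω, f ω ∂μ = ∫ ω, μ[f | m] ω ∂μ := (integral_condExp hm).symm
    _ ≤ ∫ _, c ∂μ := integral_mono_ae integrable_condExp (integrable_const c) h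
    _ = c := by simp

lemma sq_integral_abs_le_integral_sq {Y : Ω → ℝ} (hY : MemLp Y 2 μ) :
    (∫ ω, |Y ω| ∂μ) ^ 2 ≤ ∫ ω, Y ω ^ 2 ∂μ := by
  have h := variance_nonneg |Y| μ
  rw [variance_eq_sub hY.abs] at h
  simpa [sq_abs] using h

lemma integral_abs_le_of_integral_sq_le {Y : Ω → ℝ} {c : ℝ} (hY : MemLp Y 2 μ) (hc : 0 ≤ c)
    (h : ∫ ω, Y ω ^ 2 ∂μ ≤ c ^ 2) : ∫ ω, |Y ω| ∂μ ≤ c :=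
  abs_le_of_sq_le_sq' ((sq_integral_abs_le_integral_sq hY).trans h) hc |>.2

end Probability

section Descent

variable {ι : Type*} [Fintype ι] {f : (ι → ℝ) → ℝ} {g : (ι → ℝ) → ι → ℝ} {L : ι → ℝ} {δ : ℝ}

lemma sum_mul_sign_step_le (hδ : 0 ≤ δ) {x y ĝ : ι → ℝ}
    (hy : ∀ i, y i = x i - δ * Real.sign (ĝ i)) (v : ι → ℝ) :
    ∑ i, v i * (y i - x i) ≤ -(δ * ∑ i, |v i|) + 2 * δ * ∑ i, |ĝ i - v i| := by
  rw [mul_sum, mul_sum, ← sum_neg_distrib, ← sum_add_distrib]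
  refine sum_le_sum fun i _ => ?_
  rw [hy i]
  nlinarith [abs_sub_mul_sign_le (v i) (ĝ i)]

lemma sum_mul_sq_sign_step_le (hL : ∀ i, 0 ≤ L i) {x y ĝ : ι → ℝ}
    (hy : ∀ i, y i = x i - δ * Real.sign (ĝ i)) :
    ∑ i, L i * (y i - x i) ^ 2 ≤ δ ^ 2 * ∑ i, L i := by
  rw [mul_sum]
  refine sum_le_sum fun i _ => ?_
  rw [hy i, sub_sub_cancel_left, neg_sq, mul_pow]
  nlinarith [sign_sq_le_one (ĝ i), mul_nonneg (hL i) (sq_nonneg δ)]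

lemma signStep_descent
    (hsmooth : ∀ x y, f y ≤ f x + ∑ i, g x i * (y i - x i) + 1 / 2 * ∑ i, L i * (y i - x i) ^ 2)
    (hL : ∀ i, 0 ≤ L i) (hδ : 0 ≤ δ) {x y ĝ : ι → ℝ}
    (hy : ∀ i, y i = x i - δ * Real.sign (ĝ i)) :
    f y + δ * ∑ i, |g x i| ≤ f x + 2 * δ * ∑ i, |ĝ i - g x i| + δ ^ 2 * (∑ i, L i) / 2 := by
  have := hsmooth x y
  have := sum_mul_sign_step_le hδ hy (g x)
  have := sum_mul_sq_sign_step_le hL hy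
  linarith

lemma signDescent_sum_le
    (hsmooth : ∀ x y, f y ≤ f x + ∑ i, g x i * (y i - x i) + 1 / 2 * ∑ i, L i * (y i - x i) ^ 2)
    (hL : ∀ i, 0 ≤ L i) (hδ : 0 ≤ δ) {x ĝ : ℕ → ι → ℝ}
    (hx : ∀ k i, x (k + 1) i = x k i - δ * Real.sign (ĝ k i)) (K : ℕ) :
    f (x K) + δ * ∑ k ∈ range K, ∑ i, |g (x k) i| ≤
      f (x 0) + 2 * δ * ∑ k ∈ range K, ∑ i, |ĝ k i - g (x k) i| + K * (δ ^ 2 * (∑ i, L i) / 2) := by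
  induction K with
  | zero => simp
  | succ K ih =>
    have := signStep_descent hsmooth hL hδ (hx K)
    rw [sum_range_succ, sum_range_succ]
    push_cast
    linarith

lemma signSGD_integral_le {Ω : Type*} [MeasurableSpace Ω] {μ : Measure Ω} [IsProbabilityMeasure μ]
    (hsmooth : ∀ x y, f y ≤ f x + ∑ i, g x i * (y i - x i) + 1 / 2 * ∑ i, L i * (y i - x i) ^ 2)
    (hL : ∀ i, 0 ≤ L i) (hδ : 0 ≤ δ) {fstar : ℝ} (hlower : ∀ x, fstar ≤ f x)
    {X ĝ : ℕ → Ω → ι → ℝ} (hX : ∀ k ω i, X (k + 1) ω i = X k ω i - δ * Real.sign (ĝ k ω i))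
    {x₀ : ι → ℝ} (hX₀ : ∀ ω, X 0 ω = x₀) (hg : ∀ k i, Integrable (fun ω => g (X k ω) i) μ)
    (herr : ∀ k i, Integrable (fun ω => ĝ k ω i - g (X k ω) i) μ)
    {ε : ι → ℝ} (hε : ∀ k i, ∫ ω, |ĝ k ω i - g (X k ω) i| ∂μ ≤ ε i) (K : ℕ) :
    δ * ∫ ω, ∑ k ∈ range K, ∑ i, |g (X k ω) i| ∂μ ≤
      f x₀ - fstar + K * (2 * δ * ∑ i, ε i + δ ^ 2 * (∑ i, L i) / 2) := by
  set c := f x₀ - fstar + K * (δ ^ 2 * (∑ i, L i) / 2) with hc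
  have hE : Integrable (fun ω => ∑ k ∈ range K, ∑ i, |ĝ k ω i - g (X k ω) i|) μ :=
    integrable_finsetSum _ fun k _ => integrable_finsetSum _ fun i _ => (herr k i).abs
  have hpath : ∀ ω, δ * ∑ k ∈ range K, ∑ i, |g (X k ω) i| ≤
      c + 2 * δ * ∑ k ∈ range K, ∑ i, |ĝ k ω i - g (X k ω) i| := fun ω => by
    have := signDescent_sum_le hsmooth hL hδ (x := (X · ω)) (ĝ := (ĝ · ω)) (hX · ω) K
    rw [hX₀] at this
    linarith [hlower (X K ω)]
  have hEbound : ∫ ω, ∑ k ∈ range K, ∑ i, |ĝ k ω i - g (X k ω) i| ∂μ ≤ K * ∑ i, ε i := by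
    rw [integral_finsetSum _ fun k _ => integrable_finsetSum _ fun i _ => (herr k i).abs]
    refine (sum_le_sum fun k _ => ?_).trans_eq (by rw [sum_const, card_range, nsmul_eq_mul])
    rw [integral_finsetSum _ fun i _ => (herr k i).abs]
    exact sum_le_sum fun i _ => hε k i
  calc δ * ∫ ω, ∑ k ∈ range K, ∑ i, |g (X k ω) i| ∂μ
      = ∫ ω, δ * ∑ k ∈ range K, ∑ i, |g (X k ω) i| ∂μ := (integral_const_mul _ _).symm
    _ ≤ ∫ ω, c + 2 * δ * ∑ k ∈ range K, ∑ i, |ĝ k ω i - g (X k ω) i| ∂μ :=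
        integral_mono ((integrable_finsetSum _ fun k _ => integrable_finsetSum _ fun i _ =>
          (hg k i).abs).const_mul δ) ((integrable_const c).add (hE.const_mul _)) hpath
    _ = c + 2 * δ * ∫ ω, ∑ k ∈ range K, ∑ i, |ĝ k ω i - g (X k ω) i| ∂μ := by
        rw [integral_add (integrable_const c) (hE.const_mul _), integral_const_mul]; simp
    _ ≤ f x₀ - fstar + K * (2 * δ * ∑ i, ε i + δ ^ 2 * (∑ i, L i) / 2) := by
        linarith [mul_le_mul_of_nonneg_left hEbound (by positivity : (0 : ℝ) ≤ 2 * δ)]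

end Descent

lemma tuned_stepSize_bound {Λ K F S I : ℝ} (hΛ : 0 < Λ) (hK : 0 < K)
    (h : 1 / √(Λ * K) * I ≤
      F + K * (2 * (1 / √(Λ * K)) * (S / √K) + (1 / √(Λ * K)) ^ 2 * Λ / 2)) :
    1 / K * I ≤ 1 / √K * (√Λ * (F + 1 / 2) + 2 * S) := by
  obtain ⟨a, ha, rfl⟩ : ∃ a, 0 < a ∧ Λ = a ^ 2 := ⟨√Λ, by positivity, (Real.sq_sqrt hΛ.le).symm⟩
  obtain ⟨b, hb, rfl⟩ : ∃ b, 0 < b ∧ K = b ^ 2 := ⟨√K, by positivity, (Real.sq_sqrt hK.le).symm⟩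
  rw [← mul_pow, Real.sqrt_sq (by positivity), Real.sqrt_sq ha.le, Real.sqrt_sq hb.le] at *
  field_simp at h ⊢
  nlinarith

theorem signSGD_nonconvex_convergence_general
    {Ω : Type*} [MeasureSpace Ω] [IsProbabilityMeasure (ℙ : Measure Ω)]
    {d K : ℕ} (hK : 0 < K)
    (f : (Fin d → ℝ) → ℝ) (g : (Fin d → ℝ) → (Fin d → ℝ))
    (L σv : Fin d → ℝ) (fstar : ℝ)
    (hL : ∀ i, 0 ≤ L i) (hLpos : 0 < ∑ i, L i) (hσ : ∀ i, 0 ≤ σv i)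
    -- Assumption 1: lower bound
    (hlower : ∀ x, fstar ≤ f x)
    -- Assumption 2: coordinate-wise smoothness
    (hsmooth : ∀ x y : Fin d → ℝ,
      |f y - (f x + ∑ i, g x i * (y i - x i))| ≤ (1 / 2) * ∑ i, L i * (y i - x i) ^ 2)
    -- the iterates and the mini-batched stochastic gradients
    (X : ℕ → Ω → (Fin d → ℝ)) (gt : ℕ → Ω → (Fin d → ℝ))
    (x0 : Fin d → ℝ) (hX0 : ∀ ω, X 0 ω = x0)
    (hXmeas : ∀ k, Measurable (X k))
    -- signSGD update with learning rate δ = 1/√(‖L‖₁ K)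
    (δ : ℝ) (hδ : δ = 1 / Real.sqrt ((∑ i, L i) * K))
    (hupdate : ∀ k ω i, X (k + 1) ω i = X k ω i - δ * Real.sign (gt k ω i))
    -- Assumption 3: the mini-batch (size K) gradient oracle is conditionally
    -- unbiased with coordinate-wise variance bounded by σᵢ²/K
    (hint : ∀ k i, Integrable (fun ω => gt k ω i) ℙ)
    (hint2 : ∀ k i, Integrable (fun ω => (gt k ω i - g (X k ω) i) ^ 2) ℙ)
    (hunbiased : ∀ k i,
      MeasureTheory.condExp (MeasurableSpace.comap (X k) inferInstance) ℙ
          (fun ω => gt k ω i) =ᵐ[ℙ] fun ω => g (X k ω) i)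
    (hvar : ∀ k i, ∀ᵐ ω ∂ℙ,
      MeasureTheory.condExp (MeasurableSpace.comap (X k) inferInstance) ℙ
          (fun ω' => (gt k ω' i - g (X k ω') i) ^ 2) ω ≤ σv i ^ 2 / K) :
    (∫ ω, (1 / K : ℝ) * ∑ k ∈ Finset.range K, ∑ i, |g (X k ω) i| ∂ℙ) ^ 2 ≤
      (1 / Real.sqrt ((K : ℝ) ^ 2)) *
        (Real.sqrt (∑ i, L i) * (f x0 - fstar + 1 / 2) + 2 * ∑ i, σv i) ^ 2 := by
  have hKpos : (0 : ℝ) < K := by exact_mod_cast hK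
  have hg : ∀ k i, Integrable (fun ω => g (X k ω) i) ℙ := fun k i =>
    integrable_condExp.congr (hunbiased k i)
  have herr : ∀ k i, Integrable (fun ω => gt k ω i - g (X k ω) i) ℙ := fun k i =>
    (hint k i).sub (hg k i)
  have herr_abs : ∀ k i, ∫ ω, |gt k ω i - g (X k ω) i| ∂ℙ ≤ σv i / √K := fun k i => by
    refine integral_abs_le_of_integral_sq_le ((memLp_two_iff_integrable_sq (herr k i).1).2
      (hint2 k i)) (div_nonneg (hσ i) (Real.sqrt_nonneg _)) ?_
    rw [div_pow, Real.sq_sqrt hKpos.le]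
    exact integral_le_of_ae_condExp_le (hXmeas k).comap_le (hvar k i)
  have hdescent := signSGD_integral_le (fun x y => by linarith [(abs_le.mp (hsmooth x y)).2])
    hL (hδ ▸ by positivity) hlower hupdate hX0 hg herr herr_abs K
  rw [hδ, ← sum_div] at hdescent
  have hbound := tuned_stepSize_bound hLpos hKpos hdescent
  rw [integral_const_mul]
  calc _ ≤ (1 / √K * (√(∑ i, L i) * (f x0 - fstar + 1 / 2) + 2 * ∑ i, σv i)) ^ 2 :=
        pow_le_pow_left₀ (by positivity) hbound 2
    _ = _ := by rw [mul_pow, div_pow, one_pow, Real.sq_sqrt hKpos.le, Real.sqrt_sq hKpos.le]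

theorem signSGD_nonconvex_convergence
    {Ω : Type*} [MeasureSpace Ω] [IsProbabilityMeasure (ℙ : Measure Ω)]
    {d K : ℕ} (hd : 0 < d) (hK : 0 < K)
    (f : (Fin d → ℝ) → ℝ) (g : (Fin d → ℝ) → (Fin d → ℝ))
    (L σv : Fin d → ℝ) (fstar : ℝ)
    (hL : ∀ i, 0 ≤ L i) (hLpos : 0 < ∑ i, L i) (hσ : ∀ i, 0 ≤ σv i)
    -- Assumption 1: lower bound
    (hlower : ∀ x, fstar ≤ f x)
    -- Assumption 2: coordinate-wise smoothness
    (hsmooth : ∀ x y : Fin d → ℝ,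
      |f y - (f x + ∑ i, g x i * (y i - x i))| ≤ (1 / 2) * ∑ i, L i * (y i - x i) ^ 2)
    -- the iterates and the mini-batched stochastic gradients
    (X : ℕ → Ω → (Fin d → ℝ)) (gt : ℕ → Ω → (Fin d → ℝ))
    (x0 : Fin d → ℝ) (hX0 : ∀ ω, X 0 ω = x0)
    (hXmeas : ∀ k, Measurable (X k)) (hgtmeas : ∀ k, Measurable (gt k))
    -- signSGD update with learning rate δ = 1/√(‖L‖₁ K)
    (δ : ℝ) (hδ : δ = 1 / Real.sqrt ((∑ i, L i) * K))
    (hupdate : ∀ k ω i, X (k + 1) ω i = X k ω i - δ * Real.sign (gt k ω i))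
    -- Assumption 3: the mini-batch (size K) gradient oracle is conditionally
    -- unbiased with coordinate-wise variance bounded by σᵢ²/K
    (hint : ∀ k i, Integrable (fun ω => gt k ω i) ℙ)
    (hint2 : ∀ k i, Integrable (fun ω => (gt k ω i - g (X k ω) i) ^ 2) ℙ)
    (hunbiased : ∀ k i,
      MeasureTheory.condExp (MeasurableSpace.comap (X k) inferInstance) ℙ
          (fun ω => gt k ω i) =ᵐ[ℙ] fun ω => g (X k ω) i)
    (hvar : ∀ k i, ∀ᵐ ω ∂ℙ,
      MeasureTheory.condExp (MeasurableSpace.comap (X k) inferInstance) ℙ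
          (fun ω' => (gt k ω' i - g (X k ω') i) ^ 2) ω ≤ σv i ^ 2 / K) :
    (∫ ω, (1 / K : ℝ) * ∑ k ∈ Finset.range K, ∑ i, |g (X k ω) i| ∂ℙ) ^ 2 ≤
      (1 / Real.sqrt ((K : ℝ) ^ 2)) *
        (Real.sqrt (∑ i, L i) * (f x0 - fstar + 1 / 2) + 2 * ∑ i, σv i) ^ 2 :=
  signSGD_nonconvex_convergence_general hK f g L σv fstar hL hLpos hσ hlower hsmooth X gt x0 hX0
    hXmeas δ hδ hupdate hint hint2 hunbiased hvar
end

section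
/- Run SGD with learning rate δ = 1/(L√K) and batch size 1 for K iterations on an L-smooth function f bounded below by f*, with unbiased stochastic gradient variance at most σ². Then E[(1/K)Σ_{k<K} ‖g_k‖₂²] ≤ (1/√K)[2L(f₀ − f*) + σ²]. -/
/-!
For an `L`-smooth `f`, a step `x - c • v` decreases `f` by at least `c ⟪g x, v⟫ - (L c² / 2) ‖v‖²`.
Taking `v` to be the stochastic gradient and conditioning on the current iterate, unbiasedness
turns `E ⟪g, g̃⟫` into `E ‖g‖²`, and `‖g̃‖² = ‖g‖² + 2 ⟪g, g̃ - g⟫ + ‖g̃ - g‖²` contributes at most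
`σ²` beyond that. Hence `E f(x_{k+1}) ≤ E f(x_k) - (c - L c² / 2) E ‖g_k‖² + (L c² / 2) σ²`;
telescoping over `K` steps, `f ≥ f*`, and `c - L c² / 2 ≥ c / 2` for `c = 1 / (L √K)` give the rate.
Integrability of `f(x_k)` propagates along the iteration, since `f(x_{k+1})` lies between `f*`
and an integrable bound, and `‖g x‖² ≤ 2 L (f x - f*)` makes `‖g(x_k)‖²` integrable.
-/

open MeasureTheory ProbabilityTheory Finset

def IsSmoothWithGrad {ι : Type*} [Fintype ι] (f : (ι → ℝ) → ℝ) (g : (ι → ℝ) → ι → ℝ) (L : ℝ) :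
    Prop :=
  ∀ x y : ι → ℝ, |f y - (f x + ∑ i, g x i * (y i - x i))| ≤ (L / 2) * ∑ i, (y i - x i) ^ 2

namespace IsSmoothWithGrad

variable {ι : Type*} [Fintype ι] {f : (ι → ℝ) → ℝ} {g : (ι → ℝ) → ι → ℝ} {L : ℝ}

theorem continuous (hf : IsSmoothWithGrad f g L) : Continuous f := by
  refine continuous_iff_continuousAt.2 fun x => ?_
  have hlo : ∀ y, f x + ∑ i, g x i * (y i - x i) - L / 2 * ∑ i, (y i - x i) ^ 2 ≤ f y :=
    fun y => by linarith [(abs_le.1 (hf x y)).1]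
  have hhi : ∀ y, f y ≤ f x + ∑ i, g x i * (y i - x i) + L / 2 * ∑ i, (y i - x i) ^ 2 :=
    fun y => by linarith [(abs_le.1 (hf x y)).2]
  have h1 : ContinuousAt
      (fun y : ι → ℝ => f x + ∑ i, g x i * (y i - x i) - L / 2 * ∑ i, (y i - x i) ^ 2) x := by
    fun_prop
  have h2 : ContinuousAt
      (fun y : ι → ℝ => f x + ∑ i, g x i * (y i - x i) + L / 2 * ∑ i, (y i - x i) ^ 2) x := by
    fun_prop
  simp only [ContinuousAt, sub_self, mul_zero, zero_pow two_ne_zero, sum_const_zero,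
    add_zero, sub_zero] at h1 h2
  exact tendsto_of_tendsto_of_tendsto_of_le_of_le h1 h2 hlo hhi

theorem le_sub_smul (hf : IsSmoothWithGrad f g L) (x v : ι → ℝ) (c : ℝ) :
    f (x - c • v) ≤ f x - c * ∑ i, g x i * v i + L * c ^ 2 / 2 * ∑ i, v i ^ 2 := by
  have h := (abs_le.1 (hf x (x - c • v))).2
  simp only [Pi.sub_apply, Pi.smul_apply, smul_eq_mul, sub_sub_cancel_left] at h
  have e1 : ∑ i, g x i * -(c * v i) = -(c * ∑ i, g x i * v i) := by
    rw [mul_sum, ← sum_neg_distrib]; exact sum_congr rfl fun i _ => by ring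
  have e2 : ∑ i, (-(c * v i)) ^ 2 = c ^ 2 * ∑ i, v i ^ 2 := by
    rw [mul_sum]; exact sum_congr rfl fun i _ => by ring
  rw [e1, e2] at h
  linarith

theorem sum_sq_grad_le (hf : IsSmoothWithGrad f g L) (hL : 0 < L) {fstar : ℝ}
    (hlower : ∀ x, fstar ≤ f x) (x : ι → ℝ) : ∑ i, g x i ^ 2 ≤ 2 * L * (f x - fstar) := by
  have h := hf.le_sub_smul x (g x) L⁻¹
  have e : L * L⁻¹ ^ 2 / 2 = L⁻¹ / 2 := by field_simp
  rw [e] at h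
  have := hlower (x - L⁻¹ • g x)
  have hS : L⁻¹ * ∑ i, g x i ^ 2 ≤ 2 * (f x - fstar) := by
    simp only [sq] at h ⊢; linarith
  calc ∑ i, g x i ^ 2 = L * (L⁻¹ * ∑ i, g x i ^ 2) := by field_simp
    _ ≤ L * (2 * (f x - fstar)) := by gcongr
    _ = 2 * L * (f x - fstar) := by ring

end IsSmoothWithGrad

section Probability

variable {Ω : Type*} {m m₀ : MeasurableSpace Ω} {μ : Measure Ω}

theorem integral_le_of_condExp_le [IsProbabilityMeasure μ] (hm : m ≤ m₀) {F : Ω → ℝ} {C : ℝ}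
    (h : ∀ᵐ ω ∂μ, μ[F|m] ω ≤ C) : ∫ ω, F ω ∂μ ≤ C := by
  rw [← integral_condExp hm]
  simpa using integral_mono_ae integrable_condExp (integrable_const C) h

theorem integral_mul_eq_integral_sq_of_condExp_ae_eq (hm : m ≤ m₀) [SigmaFinite (μ.trim hm)]
    {Y h : Ω → ℝ} (hY : Integrable Y μ) (hhY : Integrable (h * Y) μ) (hcond : μ[Y|m] =ᵐ[μ] h) :
    ∫ ω, h ω * Y ω ∂μ = ∫ ω, h ω ^ 2 ∂μ := by
  have hpull : μ[h * Y|m] =ᵐ[μ] h * μ[Y|m] :=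
    condExp_mul_of_aestronglyMeasurable_left ⟨_, stronglyMeasurable_condExp, hcond.symm⟩ hhY hY
  calc ∫ ω, h ω * Y ω ∂μ = ∫ ω, μ[h * Y|m] ω ∂μ := (integral_condExp hm).symm
    _ = ∫ ω, h ω ^ 2 ∂μ := integral_congr_ae <| by
      filter_upwards [hpull, hcond] with ω h1 h2
      simp [h1, h2, sq]

theorem memLp_two_of_integrable_sum_sq {ι : Type*} [Fintype ι] {F : Ω → ι → ℝ}
    (hF : ∀ i, AEStronglyMeasurable (fun ω => F ω i) μ)
    (h : Integrable (fun ω => ∑ i, F ω i ^ 2) μ) (i : ι) : MemLp (fun ω => F ω i) 2 μ := by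
  refine (memLp_two_iff_integrable_sq (hF i)).2 <| h.mono' ((hF i).pow 2) ?_
  filter_upwards with ω
  rw [Real.norm_eq_abs, abs_sq]
  exact single_le_sum (f := fun j => F ω j ^ 2) (fun j _ => sq_nonneg _) (mem_univ i)

theorem integral_sum_mul_eq_integral_sum_sq_of_condExp_ae_eq [IsFiniteMeasure μ] {ι : Type*}
    [Fintype ι] (hm : m ≤ m₀) {G H : Ω → ι → ℝ} (hG : ∀ i, Integrable (fun ω => G ω i) μ)
    (hH : Integrable (fun ω => ∑ i, H ω i ^ 2) μ)
    (hGH : Integrable (fun ω => ∑ i, (G ω i - H ω i) ^ 2) μ)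
    (hcond : ∀ i, μ[fun ω => G ω i|m] =ᵐ[μ] fun ω => H ω i) :
    Integrable (fun ω => ∑ i, H ω i * G ω i) μ ∧
      ∫ ω, ∑ i, H ω i * G ω i ∂μ = ∫ ω, ∑ i, H ω i ^ 2 ∂μ := by
  have hHm : ∀ i, AEStronglyMeasurable (fun ω => H ω i) μ := fun i =>
    integrable_condExp.aestronglyMeasurable.congr (hcond i)
  have hHL2 := memLp_two_of_integrable_sum_sq hHm hH
  have hGL2 : ∀ i, MemLp (fun ω => G ω i) 2 μ := fun i => by
    simpa only [Pi.add_def, sub_add_cancel] using (memLp_two_of_integrable_sum_sq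
      (fun i => (hG i).aestronglyMeasurable.sub (hHm i)) hGH i).add (hHL2 i)
  have hmul : ∀ i, Integrable (fun ω => H ω i * G ω i) μ := fun i =>
    (hHL2 i).integrable_mul (hGL2 i)
  refine ⟨integrable_finsetSum _ fun i _ => hmul i, ?_⟩
  rw [integral_finsetSum _ fun i _ => hmul i,
    integral_finsetSum _ fun i _ => (memLp_two_iff_integrable_sq (hHm i)).1 (hHL2 i)]
  exact sum_congr rfl fun i _ =>
    integral_mul_eq_integral_sq_of_condExp_ae_eq hm (hG i) (hmul i) (hcond i)

end Probability

section SGD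

variable {ι Ω : Type*} [Fintype ι] [MeasurableSpace Ω] {μ : Measure Ω} [IsProbabilityMeasure μ]
  {f : (ι → ℝ) → ℝ} {g : (ι → ℝ) → ι → ℝ} {L fstar : ℝ}

theorem IsSmoothWithGrad.integrable_sum_sq_grad_comp (hf : IsSmoothWithGrad f g L) (hL : 0 < L)
    (hlower : ∀ x, fstar ≤ f x) {Y : Ω → ι → ℝ}
    (hgY : ∀ i, AEStronglyMeasurable (fun ω => g (Y ω) i) μ)
    (hfY : Integrable (fun ω => f (Y ω)) μ) : Integrable (fun ω => ∑ i, g (Y ω) i ^ 2) μ := by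
  refine ((hfY.sub (integrable_const fstar)).const_mul (2 * L)).mono'
    (Finset.aestronglyMeasurable_fun_sum _ fun i _ => (hgY i).pow 2) ?_
  filter_upwards with ω
  rw [Real.norm_eq_abs, abs_of_nonneg (sum_nonneg fun i _ => sq_nonneg _)]
  exact hf.sum_sq_grad_le hL hlower (Y ω)

theorem integral_comp_sgd_step_le (hf : IsSmoothWithGrad f g L) (hL : 0 < L)
    (hlower : ∀ x, fstar ≤ f x) {Y G : Ω → ι → ℝ} (hY : Measurable Y)
    (hG : ∀ i, Integrable (fun ω => G ω i) μ)
    (hnoise : Integrable (fun ω => ∑ i, (G ω i - g (Y ω) i) ^ 2) μ)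
    (hunb : ∀ i, μ[fun ω => G ω i|MeasurableSpace.comap Y inferInstance] =ᵐ[μ]
      fun ω => g (Y ω) i)
    (hfY : Integrable (fun ω => f (Y ω)) μ) (c : ℝ) :
    Integrable (fun ω => f (Y ω - c • G ω)) μ ∧
      ∫ ω, f (Y ω - c • G ω) ∂μ ≤ ∫ ω, f (Y ω) ∂μ
        - (c - L * c ^ 2 / 2) * ∫ ω, ∑ i, g (Y ω) i ^ 2 ∂μ
        + L * c ^ 2 / 2 * ∫ ω, ∑ i, (G ω i - g (Y ω) i) ^ 2 ∂μ := by
  have hgY : ∀ i, AEStronglyMeasurable (fun ω => g (Y ω) i) μ := fun i =>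
    integrable_condExp.aestronglyMeasurable.congr (hunb i)
  have hg2 := hf.integrable_sum_sq_grad_comp hL hlower hgY hfY
  obtain ⟨hgG, hgG_eq⟩ := integral_sum_mul_eq_integral_sum_sq_of_condExp_ae_eq hY.comap_le hG hg2
    hnoise hunb
  -- expand `‖G‖² = ‖G - g‖² + 2 ⟪g, G⟫ - ‖g‖²` in the descent inequality
  have hle : ∀ ω, f (Y ω - c • G ω) ≤ f (Y ω) - (c - L * c ^ 2) * ∑ i, g (Y ω) i * G ω i
      - L * c ^ 2 / 2 * ∑ i, g (Y ω) i ^ 2 + L * c ^ 2 / 2 * ∑ i, (G ω i - g (Y ω) i) ^ 2 :=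
    fun ω => by
      have hsq : ∑ i, G ω i ^ 2 = ∑ i, (G ω i - g (Y ω) i) ^ 2
          + 2 * ∑ i, g (Y ω) i * G ω i - ∑ i, g (Y ω) i ^ 2 := by
        rw [mul_sum, ← sum_add_distrib, ← sum_sub_distrib]
        exact sum_congr rfl fun i _ => by ring
      linarith [hsq ▸ hf.le_sub_smul (Y ω) (G ω) c]
  have h₁ : Integrable (fun ω => f (Y ω) - (c - L * c ^ 2) * ∑ i, g (Y ω) i * G ω i) μ :=
    hfY.sub (hgG.const_mul _)
  have h₂ : Integrable (fun ω => f (Y ω) - (c - L * c ^ 2) * ∑ i, g (Y ω) i * G ω i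
      - L * c ^ 2 / 2 * ∑ i, g (Y ω) i ^ 2) μ :=
    h₁.sub (hg2.const_mul _)
  have hU : Integrable (fun ω => f (Y ω) - (c - L * c ^ 2) * ∑ i, g (Y ω) i * G ω i
      - L * c ^ 2 / 2 * ∑ i, g (Y ω) i ^ 2 + L * c ^ 2 / 2 * ∑ i, (G ω i - g (Y ω) i) ^ 2) μ :=
    h₂.add (hnoise.const_mul _)
  have hmeas : AEStronglyMeasurable (fun ω => f (Y ω - c • G ω)) μ :=
    (hf.continuous.measurable.comp_aemeasurable (hY.aemeasurable.sub
      ((aemeasurable_pi_lambda _ fun i => (hG i).aemeasurable).const_smul c))).aestronglyMeasurable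
  have hint : Integrable (fun ω => f (Y ω - c • G ω)) μ :=
    integrable_of_le_of_le hmeas (ae_of_all _ fun ω => hlower _) (ae_of_all _ hle)
      (integrable_const fstar) hU
  refine ⟨hint, (integral_mono hint hU hle).trans_eq ?_⟩
  rw [integral_add h₂ (hnoise.const_mul _), integral_sub h₁ (hg2.const_mul _),
    integral_sub hfY (hgG.const_mul _), integral_const_mul, integral_const_mul,
    integral_const_mul, hgG_eq]
  ring

end SGD

theorem mul_sum_range_le_of_le_sub_add {u v : ℕ → ℝ} {a b lo : ℝ} {n : ℕ}
    (h : ∀ k, u (k + 1) ≤ u k - a * v k + b) (hlo : lo ≤ u n) :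
    a * ∑ k ∈ range n, v k ≤ u 0 - lo + n * b := by
  have htel := sum_range_sub' u n
  have hsum := sum_le_sum fun k (_ : k ∈ range n) => h k
  simp only [sum_add_distrib, sum_sub_distrib, ← mul_sum, sum_const, card_range,
    nsmul_eq_mul] at htel hsum
  linarith

theorem sgd_rate_le_of_telescoped {K L S Δ V : ℝ} (hK : 1 ≤ K) (hL : 0 < L) (hS : 0 ≤ S)
    (h : (1 / (L * √K) - L * (1 / (L * √K)) ^ 2 / 2) * S ≤
      Δ + K * (L * (1 / (L * √K)) ^ 2 / 2 * V)) :
    1 / K * S ≤ 1 / √K * (2 * L * Δ + V) := by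
  obtain ⟨q, hq1, rfl⟩ : ∃ q : ℝ, 1 ≤ q ∧ K = q ^ 2 :=
    ⟨√K, Real.one_le_sqrt.2 hK, (Real.sq_sqrt (by linarith)).symm⟩
  have hq : 0 < q := by linarith
  rw [Real.sqrt_sq hq.le] at h ⊢
  have e1 : 1 / (L * q) - L * (1 / (L * q)) ^ 2 / 2 = (2 * q - 1) / (2 * L * q ^ 2) := by
    field_simp
  have e2 : q ^ 2 * (L * (1 / (L * q)) ^ 2 / 2 * V) = V / (2 * L) := by
    field_simp
  rw [e1, e2] at h
  have h' : (2 * q - 1) * S ≤ q ^ 2 * (2 * L * Δ + V) := by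
    have := mul_le_mul_of_nonneg_left h (by positivity : (0:ℝ) ≤ 2 * L * q ^ 2)
    field_simp at this
    linarith
  rw [div_mul_eq_mul_div, one_mul, div_mul_eq_mul_div, one_mul, div_le_div_iff₀ (by positivity) hq]
  nlinarith

theorem smallBatchSGD_nonconvex_convergence_general
    {Ω : Type*} [MeasureSpace Ω] [IsProbabilityMeasure (ℙ : Measure Ω)]
    {d K : ℕ} (hK : 0 < K)
    (f : (Fin d → ℝ) → ℝ) (g : (Fin d → ℝ) → (Fin d → ℝ))
    (L σ fstar : ℝ) (hL : 0 < L)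
    (hlower : ∀ x, fstar ≤ f x)
    (hsmooth : ∀ x y : Fin d → ℝ,
      |f y - (f x + ∑ i, g x i * (y i - x i))| ≤ (L / 2) * ∑ i, (y i - x i) ^ 2)
    (X : ℕ → Ω → (Fin d → ℝ)) (gt : ℕ → Ω → (Fin d → ℝ))
    (x0 : Fin d → ℝ) (hX0 : ∀ ω, X 0 ω = x0)
    (hXmeas : ∀ k, Measurable (X k))
    -- SGD update with learning rate δ = 1/(L√K)
    (hupdate : ∀ k ω i, X (k + 1) ω i = X k ω i - (1 / (L * Real.sqrt K)) * gt k ω i)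
    -- the (batch size 1) gradient oracle is conditionally unbiased
    -- with total variance bounded by σ²
    (hint : ∀ k i, Integrable (fun ω => gt k ω i) ℙ)
    (hint2 : ∀ k, Integrable (fun ω => ∑ i, (gt k ω i - g (X k ω) i) ^ 2) ℙ)
    (hunbiased : ∀ k i,
      MeasureTheory.condExp (MeasurableSpace.comap (X k) inferInstance) ℙ
        (fun ω => gt k ω i) =ᵐ[ℙ] fun ω => g (X k ω) i)
    (hvar : ∀ k, ∀ᵐ ω ∂ℙ,
      MeasureTheory.condExp (MeasurableSpace.comap (X k) inferInstance) ℙ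
        (fun ω' => ∑ i, (gt k ω' i - g (X k ω') i) ^ 2) ω ≤ σ ^ 2) :
    ∫ ω, (1 / K : ℝ) * ∑ k ∈ Finset.range K, ∑ i, (g (X k ω) i) ^ 2 ∂ℙ ≤
      (1 / Real.sqrt K : ℝ) * (2 * L * (f x0 - fstar) + σ ^ 2) := by
  have hf : IsSmoothWithGrad f g L := hsmooth
  set c : ℝ := 1 / (L * Real.sqrt K)
  have hstep : ∀ k, Integrable (fun ω => f (X k ω)) ℙ →
      Integrable (fun ω => f (X (k + 1) ω)) ℙ ∧
        ∫ ω, f (X (k + 1) ω) ∂ℙ ≤ ∫ ω, f (X k ω) ∂ℙ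
          - (c - L * c ^ 2 / 2) * ∫ ω, ∑ i, g (X k ω) i ^ 2 ∂ℙ + L * c ^ 2 / 2 * σ ^ 2 := by
    intro k hk
    have hX : X (k + 1) = fun ω => X k ω - c • gt k ω := by
      ext ω i; simp [hupdate, c]
    obtain ⟨hnext, hle⟩ := integral_comp_sgd_step_le hf hL hlower (hXmeas k) (hint k)
      (hint2 k) (hunbiased k) hk c
    refine hX ▸ ⟨hnext, hle.trans ?_⟩
    gcongr
    exact integral_le_of_condExp_le (hXmeas k).comap_le (hvar k)
  have hfX : ∀ k, Integrable (fun ω => f (X k ω)) ℙ := by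
    intro k
    induction k with
    | zero => simpa only [hX0] using integrable_const (f x0)
    | succ k ih => exact (hstep k ih).1
  have hgX : ∀ k, Integrable (fun ω => ∑ i, g (X k ω) i ^ 2) ℙ := fun k =>
    hf.integrable_sum_sq_grad_comp hL hlower
      (fun i => integrable_condExp.aestronglyMeasurable.congr (hunbiased k i)) (hfX k)
  have hlast : fstar ≤ ∫ ω, f (X K ω) ∂ℙ := by
    simpa using integral_mono (integrable_const fstar) (hfX K) fun ω => hlower (X K ω)
  have hsum := mul_sum_range_le_of_le_sub_add (u := fun k => ∫ ω, f (X k ω) ∂ℙ)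
    (fun k => (hstep k (hfX k)).2) hlast
  simp only [hX0, integral_const, probReal_univ, one_smul] at hsum
  rw [integral_const_mul, integral_finsetSum _ fun k _ => hgX k]
  exact sgd_rate_le_of_telescoped (by exact_mod_cast hK) hL
    (sum_nonneg fun k _ => integral_nonneg fun ω => sum_nonneg fun i _ => sq_nonneg _) hsum

theorem smallBatchSGD_nonconvex_convergence
    {Ω : Type*} [MeasureSpace Ω] [IsProbabilityMeasure (ℙ : Measure Ω)]
    {d K : ℕ} (hK : 0 < K)
    (f : (Fin d → ℝ) → ℝ) (g : (Fin d → ℝ) → (Fin d → ℝ))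
    (L σ fstar : ℝ) (hL : 0 < L) (hσ : 0 ≤ σ)
    (hlower : ∀ x, fstar ≤ f x)
    (hsmooth : ∀ x y : Fin d → ℝ,
      |f y - (f x + ∑ i, g x i * (y i - x i))| ≤ (L / 2) * ∑ i, (y i - x i) ^ 2)
    (X : ℕ → Ω → (Fin d → ℝ)) (gt : ℕ → Ω → (Fin d → ℝ))
    (x0 : Fin d → ℝ) (hX0 : ∀ ω, X 0 ω = x0)
    (hXmeas : ∀ k, Measurable (X k)) (hgtmeas : ∀ k, Measurable (gt k))
    -- SGD update with learning rate δ = 1/(L√K)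
    (hupdate : ∀ k ω i, X (k + 1) ω i = X k ω i - (1 / (L * Real.sqrt K)) * gt k ω i)
    -- the (batch size 1) gradient oracle is conditionally unbiased
    -- with total variance bounded by σ²
    (hint : ∀ k i, Integrable (fun ω => gt k ω i) ℙ)
    (hint2 : ∀ k, Integrable (fun ω => ∑ i, (gt k ω i - g (X k ω) i) ^ 2) ℙ)
    (hunbiased : ∀ k i,
      MeasureTheory.condExp (MeasurableSpace.comap (X k) inferInstance) ℙ
        (fun ω => gt k ω i) =ᵐ[ℙ] fun ω => g (X k ω) i)
    (hvar : ∀ k, ∀ᵐ ω ∂ℙ,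
      MeasureTheory.condExp (MeasurableSpace.comap (X k) inferInstance) ℙ
        (fun ω' => ∑ i, (gt k ω' i - g (X k ω') i) ^ 2) ω ≤ σ ^ 2) :
    ∫ ω, (1 / K : ℝ) * ∑ k ∈ Finset.range K, ∑ i, (g (X k ω) i) ^ 2 ∂ℙ ≤
      (1 / Real.sqrt K : ℝ) * (2 * L * (f x0 - fstar) + σ ^ 2) :=
  smallBatchSGD_nonconvex_convergence_general hK f g L σ fstar hL hlower hsmooth X gt x0 hX0 hXmeas
    hupdate hint hint2 hunbiased hvar
end

section
/- Let f : ℝ^d → ℝ be twice continuously differentiable satisfying −diag(L) ⪯ H(x) ⪯ diag(L) for all x, where L ∈ ℝ^d has nonnegative entries and H is the Hessian. Then for any sign vector s ∈ {−1,+1}^d, any x ∈ ℝ^d and any ε > 0, ‖∇f(x + εs) − ∇f(x)‖₁ ≤ 2ε‖L‖₁. -/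
/-!
Since the Hessian `H` is symmetric, polarization turns the two-sided bound on its quadratic
form `Q(v) = ⟪v, H v⟫` into
`4 |⟪σ, H s⟫| ≤ |Q(σ + s)| + |Q(σ - s)| ≤ ∑ᵢ Lᵢ ((σᵢ + sᵢ)² + (σᵢ - sᵢ)²) = 4 ‖L‖₁`
for any two sign vectors `σ, s`. Choosing `σ` as the sign pattern of `g = ∇f(x + εs) - ∇f(x)`
gives `‖g‖₁ = ⟪σ, g⟫`, and the mean value theorem along the segment from `x` to `x + εs`
bounds this by `ε ‖L‖₁`.
-/

open InnerProductSpace Finset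
open scoped RealInnerProductSpace

section Hessian

variable {E : Type*} [NormedAddCommGroup E] [InnerProductSpace ℝ E] [CompleteSpace E]
  {f : E → ℝ}

theorem ContDiff.differentiable_gradient (hf : ContDiff ℝ 2 f) :
    Differentiable ℝ (gradient f) :=
  (toDual ℝ E).symm.differentiable.comp
    ((hf.fderiv_right (m := 1) le_rfl).differentiable one_ne_zero)

theorem inner_fderiv_gradient_apply (x v w : E) :
    ⟪fderiv ℝ (gradient f) x v, w⟫ = fderiv ℝ (fderiv ℝ f) x v w := by
  rw [show gradient f = (toDual ℝ E).symm ∘ fderiv ℝ f from rfl,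
    LinearIsometryEquiv.comp_fderiv]
  exact toDual_symm_apply

theorem ContDiffAt.isSymmetric_fderiv_gradient {x : E} (hf : ContDiffAt ℝ 2 f x) :
    ((fderiv ℝ (gradient f) x : E →L[ℝ] E) : E →ₗ[ℝ] E).IsSymmetric := fun v w => by
  rw [ContinuousLinearMap.coe_coe, inner_fderiv_gradient_apply,
    real_inner_comm, inner_fderiv_gradient_apply, (hf.isSymmSndFDerivAt (by simp)).eq]

end Hessian

theorem LinearMap.IsSymmetric.four_mul_abs_inner_le {E : Type*} [NormedAddCommGroup E]
    [InnerProductSpace ℝ E] {T : E →ₗ[ℝ] E} (hT : T.IsSymmetric) (u w : E) :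
    4 * |⟪u, T w⟫| ≤ |⟪u + w, T (u + w)⟫| + |⟪u - w, T (u - w)⟫| := by
  have hpol : 4 * ⟪u, T w⟫ = ⟪u + w, T (u + w)⟫ - ⟪u - w, T (u - w)⟫ := by
    simp only [map_add, map_sub, inner_add_left, inner_add_right, inner_sub_left,
      inner_sub_right, ← hT u w, real_inner_comm (T u) w]
    ring
  calc 4 * |⟪u, T w⟫| = |4 * ⟪u, T w⟫| := by rw [abs_mul, abs_of_pos (four_pos : (0 : ℝ) < 4)]
    _ ≤ _ := hpol ▸ abs_sub _ _

section Signs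

variable {ι : Type*} [Fintype ι]

theorem sum_mul_add_sq_add_sum_mul_sub_sq_of_sign (L u w : ι → ℝ)
    (hu : ∀ i, u i = 1 ∨ u i = -1) (hw : ∀ i, w i = 1 ∨ w i = -1) :
    ∑ i, L i * (u i + w i) ^ 2 + ∑ i, L i * (u i - w i) ^ 2 = 4 * ∑ i, L i := by
  rw [← sum_add_distrib, mul_sum]
  refine sum_congr rfl fun i _ => ?_
  linear_combination (2 * L i) * (sq_eq_one_iff.2 (hu i)) + (2 * L i) * (sq_eq_one_iff.2 (hw i))

theorem LinearMap.IsSymmetric.abs_inner_le_sum_of_sign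
    {T : EuclideanSpace ℝ ι →ₗ[ℝ] EuclideanSpace ℝ ι}
    (hT : T.IsSymmetric) {L : ι → ℝ} (hTL : ∀ v, |⟪v, T v⟫| ≤ ∑ i, L i * v i ^ 2)
    {u w : EuclideanSpace ℝ ι} (hu : ∀ i, u i = 1 ∨ u i = -1) (hw : ∀ i, w i = 1 ∨ w i = -1) :
    |⟪u, T w⟫| ≤ ∑ i, L i := by
  have hpol := hT.four_mul_abs_inner_le u w
  have hsum := sum_mul_add_sq_add_sum_mul_sub_sq_of_sign L u w hu hw
  have hplus := hTL (u + w)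
  have hminus := hTL (u - w)
  simp only [PiLp.add_apply, PiLp.sub_apply] at hplus hminus
  linarith

theorem exists_sign_inner_eq_sum_abs (g : EuclideanSpace ℝ ι) :
    ∃ σ : EuclideanSpace ℝ ι, (∀ i, σ i = 1 ∨ σ i = -1) ∧ ⟪σ, g⟫ = ∑ i, |g i| := by
  refine ⟨WithLp.toLp 2 fun i => if 0 ≤ g i then 1 else -1, fun i => ?_, ?_⟩
  · dsimp only; split_ifs <;> simp
  · rw [PiLp.inner_apply]
    refine sum_congr rfl fun i _ => ?_
    simp only [RCLike.inner_apply, conj_trivial]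
    split_ifs with h
    · rw [mul_one, abs_of_nonneg h]
    · rw [mul_neg_one, abs_of_neg (not_le.1 h)]

end Signs

theorem abs_inner_sub_le_of_abs_inner_fderiv_le {E F : Type*} [NormedAddCommGroup E]
    [NormedSpace ℝ E] [NormedAddCommGroup F] [InnerProductSpace ℝ F] {G : E → F}
    (hG : Differentiable ℝ G) (σ : F) (x v : E) {C : ℝ}
    (hC : ∀ y, |⟪σ, fderiv ℝ G y v⟫| ≤ C) :
    |⟪σ, G (x + v) - G x⟫| ≤ C := by
  have hφ : ∀ t : ℝ, HasDerivAt (fun t : ℝ => ⟪σ, G (x + t • v)⟫)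
      ⟪σ, fderiv ℝ G (x + t • v) v⟫ t := by
    intro t
    have hline : HasDerivAt (fun t : ℝ => x + t • v) v t := by
      simpa using ((hasDerivAt_id t).smul_const v).const_add x
    exact (innerSL ℝ σ).hasFDerivAt.comp_hasDerivAt t
      ((hG _).hasFDerivAt.comp_hasDerivAt t hline)
  simpa [inner_sub_right] using norm_image_sub_le_of_norm_deriv_le_segment_01'
    (fun t _ => (hφ t).hasDerivWithinAt) (fun t _ => hC _)

theorem gradient_l1_perturbation_bound_general {d : ℕ}
    (f : EuclideanSpace ℝ (Fin d) → ℝ) (hf : ContDiff ℝ 2 f)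
    (L : Fin d → ℝ)
    -- `−diag(L) ⪯ H(x) ⪯ diag(L)` expressed via the quadratic form of the Hessian
    (hHess : ∀ x v : EuclideanSpace ℝ (Fin d),
      |(inner ℝ v ((fderiv ℝ (gradient f) x) v) : ℝ)| ≤ ∑ i, L i * (v i) ^ 2)
    (s : EuclideanSpace ℝ (Fin d)) (hs : ∀ i, s i = 1 ∨ s i = -1)
    (x : EuclideanSpace ℝ (Fin d)) (ε : ℝ) (hε : 0 < ε) :
    ∑ i, |gradient f (x + ε • s) i - gradient f x i| ≤ 2 * ε * ∑ i, L i := by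
  have hsign : ∀ y {u : EuclideanSpace ℝ (Fin d)}, (∀ i, u i = 1 ∨ u i = -1) →
      |⟪u, fderiv ℝ (gradient f) y s⟫| ≤ ∑ i, L i := fun y _ hu =>
    hf.contDiffAt.isSymmetric_fderiv_gradient.abs_inner_le_sum_of_sign (hHess y) hu hs
  obtain ⟨σ, hσ, hσg⟩ := exists_sign_inner_eq_sum_abs (gradient f (x + ε • s) - gradient f x)
  have hmean : |⟪σ, gradient f (x + ε • s) - gradient f x⟫| ≤ ε * ∑ i, L i :=
    abs_inner_sub_le_of_abs_inner_fderiv_le hf.differentiable_gradient σ x (ε • s) fun y => by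
      rw [map_smul, inner_smul_right, abs_mul, abs_of_pos hε]
      exact mul_le_mul_of_nonneg_left (hsign y hσ) hε.le
  have hL : 0 ≤ ∑ i, L i := (abs_nonneg _).trans (hsign x hσ)
  calc ∑ i, |gradient f (x + ε • s) i - gradient f x i|
      = ⟪σ, gradient f (x + ε • s) - gradient f x⟫ := by simp only [hσg, PiLp.sub_apply]
    _ ≤ ε * ∑ i, L i := (le_abs_self _).trans hmean
    _ ≤ 2 * ε * ∑ i, L i := by nlinarith

theorem gradient_l1_perturbation_bound {d : ℕ}
    (f : EuclideanSpace ℝ (Fin d) → ℝ) (hf : ContDiff ℝ 2 f)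
    (L : Fin d → ℝ) (hL : ∀ i, 0 ≤ L i)
    -- `−diag(L) ⪯ H(x) ⪯ diag(L)` expressed via the quadratic form of the Hessian
    (hHess : ∀ x v : EuclideanSpace ℝ (Fin d),
      |(inner ℝ v ((fderiv ℝ (gradient f) x) v) : ℝ)| ≤ ∑ i, L i * (v i) ^ 2)
    (s : EuclideanSpace ℝ (Fin d)) (hs : ∀ i, s i = 1 ∨ s i = -1)
    (x : EuclideanSpace ℝ (Fin d)) (ε : ℝ) (hε : 0 < ε) :
    ∑ i, |gradient f (x + ε • s) i - gradient f x i| ≤ 2 * ε * ∑ i, L i :=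
  gradient_l1_perturbation_bound_general f hf L hHess s hs x ε hε
end
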